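/- arXiv:2208.01515 — 5 statements merged into one kernel-verified Lean document; each statement's English description precedes it below -/
import Mathlib

section
/- In the position-based model, for a recommendation displaying item i at position k and item j at position l (k ≠ l), the expected click difference satisfies Δ̃_{i,j}(a) = (1/2)(κ_k + κ_l)(θ_i − θ_j) / D where D > 0 is the probability of observing different clicks; consequently Δ̃_{i,j}(a) > 0 if and only if θ_i > θ_j, provided κ_k + κ_l > 0. -/
/-- In the position-based model, for items `i` (position `k`, observation probability `κk`,
attractiveness `θi`) and `j` (position `l`, probabilities `κl`, `θj`), the expected click
difference under uniform randomization over the recommendation and its swap is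
`Δ̃ = (p10 - p01) / D` with `p10 = (1/2)(κk θi (1 - κl θj) + κl θi (1 - κk θj))`,
`p01 = (1/2)(κl θj (1 - κk θi) + κk θj (1 - κl θi))` and `D = p10 + p01` the probability of
observing different clicks.  If `D > 0` then `Δ̃ = (1/2)(κk + κl)(θi - θj) / D`, and,
provided `κk + κl > 0`, `Δ̃ > 0 ↔ θi > θj`. -/
theorem stmt_4 (θi θj κk κl : ℝ)
    (hθi : θi ∈ Set.Ioc (0 : ℝ) 1) (hθj : θj ∈ Set.Ioc (0 : ℝ) 1)
    (hκk : κk ∈ Set.Icc (0 : ℝ) 1) (hκl : κl ∈ Set.Icc (0 : ℝ) 1)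
    (hκ : 0 < κk + κl)
    (p10 p01 D Δ : ℝ)
    (hp10 : p10 = (1 / 2) * (κk * θi * (1 - κl * θj) + κl * θi * (1 - κk * θj)))
    (hp01 : p01 = (1 / 2) * (κl * θj * (1 - κk * θi) + κk * θj * (1 - κl * θi)))
    (hD : D = p10 + p01) (hDpos : 0 < D)
    (hΔ : Δ = (p10 - p01) / D) :
    Δ = (1 / 2) * (κk + κl) * (θi - θj) / D ∧ (0 < Δ ↔ θj < θi) := by
  have hdiff : p10 - p01 = (1 / 2) * (κk + κl) * (θi - θj) := by
    rw [hp10, hp01]; ring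
  have h1 : Δ = (1 / 2) * (κk + κl) * (θi - θj) / D := by rw [hΔ, hdiff]
  refine ⟨h1, ?_⟩
  rw [h1]
  rw [div_pos_iff]
  constructor
  · rintro (⟨h, _⟩ | ⟨_, hD'⟩)
    · nlinarith
    · linarith
  · intro h
    left
    exact ⟨by nlinarith, hDpos⟩
end

section
/- Let (X^a_t) for a in a finite set R be independent sequences of independent random variables bounded in [0,B], (ε^a_t) be previsible Bernoulli selection sequences with ∑_a ε^a_t ∈ {0,1}, S(t) = ∑_{s≤t} ∑_a ε^a_s (X^a_s − E[X^a_s]), T(t) = ∑_{s≤t} ∑_a ε^a_s, and φ a stopping time bounded by T+1 such that on {φ ≤ T} we have T(φ) ≥ n. Then for any δ > 0, P(S(φ) ≥ T(φ)·δ, φ ≤ T) ≤ exp(−2nδ²/B²). -/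
open MeasureTheory ProbabilityTheory

/-! With `c = s l² / 2`, where `s = B² / 4` is the sub-Gaussian constant that Hoeffding's lemma
gives for a centred variable with values in an interval of length `B`, the process
`exp (l S_t - c N_t)` stopped at `φ` has expectation at most `1`. In each round at most one
source is selected, and the selection is known before its reward is drawn, so the selected
increment multiplies the expectation by at most `E[exp (l Y)] exp (-c) ≤ 1`. On the event in
question the stopped value at time `T + 1` is at least `exp ((l δ - c) N_φ) ≥ exp (c n)` for
`l = 4 δ / B²`, and Markov's inequality gives the bound `exp (-c n) = exp (-2 n δ² / B²)`. -/

open Real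
open scoped NNReal

lemma exp_sum_mul_eq_of_selector {R : Type*} [Fintype R] {q x : R → ℝ}
    (hq : ∀ a, q a = 0 ∨ q a = 1) (hsum : ∑ a, q a ≤ 1) :
    exp (∑ a, q a * x a) = 1 - ∑ a, q a + ∑ a, q a * exp (x a) := by
  classical
  by_cases hsel : ∃ b, q b = 1
  · obtain ⟨b, hb⟩ := hsel
    have hq0 : ∀ a, 0 ≤ q a := fun a => by rcases hq a with h | h <;> simp [h]
    have hrest : ∀ a, a ≠ b → q a = 0 := by
      intro a hab
      have hsum_eq := Finset.add_sum_erase Finset.univ q (Finset.mem_univ b)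
      have hle := Finset.single_le_sum (fun i _ => hq0 i)
        (Finset.mem_erase.mpr ⟨hab, Finset.mem_univ a⟩)
      exact (hq a).resolve_right fun ha => by linarith
    have hsingle : ∀ y : R → ℝ, ∑ a, q a * y a = y b := fun y => by
      rw [Finset.sum_eq_single b (fun a _ hab => by simp [hrest a hab]) (by simp), hb, one_mul]
    have hsum1 : ∑ a, q a = 1 := by simpa using hsingle 1
    rw [hsingle, hsingle fun a => exp (x a), hsum1]
    ring
  · push Not at hsel
    have hzero : ∀ a, q a = 0 := fun a => (hq a).resolve_right (hsel a)
    simp [hzero]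

section

variable {Ω : Type*} {m₀ : MeasurableSpace Ω} {μ : Measure Ω}

lemma comap_comp_le {β γ : Type*} [MeasurableSpace β] [MeasurableSpace γ] {f : β → γ}
    (hf : Measurable f) (X : Ω → β) :
    MeasurableSpace.comap (f ∘ X) inferInstance ≤ MeasurableSpace.comap X inferInstance := by
  rw [← MeasurableSpace.comap_comp]
  exact MeasurableSpace.comap_mono hf.comap_le

lemma integral_mul_exp_le_of_indep {m : MeasurableSpace Ω} (hm : m ≤ m₀) {V Y : Ω → ℝ}
    {s : ℝ≥0} (hVm : Measurable[m] V) (hV : Integrable V μ) (hV0 : 0 ≤ V)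
    (hY : HasSubgaussianMGF Y s μ) (hindep : Indep (MeasurableSpace.comap Y inferInstance) m μ)
    (l : ℝ) :
    Integrable (fun ω => V ω * exp (l * Y ω - s * l ^ 2 / 2)) μ ∧
      ∫ ω, V ω * exp (l * Y ω - s * l ^ 2 / 2) ∂μ ≤ ∫ ω, V ω ∂μ := by
  have hVexp : IndepFun V (fun ω => exp (l * Y ω)) μ := by
    rw [IndepFun_iff_Indep]
    refine indep_of_indep_of_le_left (indep_of_indep_of_le_right hindep.symm ?_) hVm.comap_le
    exact comap_comp_le (f := fun y => exp (l * y)) (by fun_prop) Y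
  have hsplit : (fun ω => V ω * exp (l * Y ω - s * l ^ 2 / 2))
      = fun ω => V ω * exp (l * Y ω) * exp (-(s * l ^ 2 / 2)) := by
    ext ω; rw [sub_eq_add_neg, exp_add, mul_assoc]
  rw [hsplit, integral_mul_const,
    hVexp.integral_fun_mul_eq_mul_integral (hVm.mono hm le_rfl).aestronglyMeasurable
      (hY.integrable_exp_mul l).aestronglyMeasurable]
  refine ⟨(hVexp.integrable_mul hV (hY.integrable_exp_mul l)).mul_const _, ?_⟩
  have hmgf : (∫ ω, exp (l * Y ω) ∂μ) * exp (-(s * l ^ 2 / 2)) ≤ 1 := by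
    calc (∫ ω, exp (l * Y ω) ∂μ) * exp (-(s * l ^ 2 / 2))
        ≤ exp (s * l ^ 2 / 2) * exp (-(s * l ^ 2 / 2)) := by
          gcongr; exact hY.mgf_le l
      _ = 1 := by rw [← exp_add, add_neg_cancel, exp_zero]
  calc (∫ ω, V ω ∂μ) * (∫ ω, exp (l * Y ω) ∂μ) * exp (-(s * l ^ 2 / 2))
      = (∫ ω, V ω ∂μ) * ((∫ ω, exp (l * Y ω) ∂μ) * exp (-(s * l ^ 2 / 2))) := by ring
    _ ≤ ∫ ω, V ω ∂μ := mul_le_of_le_one_right (integral_nonneg hV0) hmgf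

lemma integral_mul_exp_sum_le_of_indep {R : Type*} [Fintype R] {m : MeasurableSpace Ω}
    (hm : m ≤ m₀) {W : Ω → ℝ} {q Y : R → Ω → ℝ} {s : ℝ≥0}
    (hWm : Measurable[m] W) (hW : Integrable W μ) (hW0 : 0 ≤ W)
    (hqm : ∀ a, Measurable[m] (q a)) (hq : ∀ a ω, q a ω = 0 ∨ q a ω = 1)
    (hqsum : ∀ ω, ∑ a, q a ω ≤ 1) (hY : ∀ a, HasSubgaussianMGF (Y a) s μ)
    (hindep : ∀ a, Indep (MeasurableSpace.comap (Y a) inferInstance) m μ) (l : ℝ) :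
    Integrable (fun ω => W ω * exp (∑ a, q a ω * (l * Y a ω - s * l ^ 2 / 2))) μ ∧
      ∫ ω, W ω * exp (∑ a, q a ω * (l * Y a ω - s * l ^ 2 / 2)) ∂μ ≤ ∫ ω, W ω ∂μ := by
  have hWq : ∀ a, Integrable (fun ω => W ω * q a ω) μ := fun a =>
    hW.mul_bdd (c := 1) ((hqm a).mono hm le_rfl).aestronglyMeasurable
      (ae_of_all _ fun ω => by rcases hq a ω with h | h <;> simp [h])
  have hstep a := integral_mul_exp_le_of_indep hm (V := fun ω => W ω * q a ω)
    (hWm.mul (hqm a)) (hWq a)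
    (fun ω => mul_nonneg (hW0 ω) (by rcases hq a ω with h | h <;> simp [h])) (hY a) (hindep a) l
  -- At most one `q a ω` is `1`, so the exponential is affine in the selected terms and only the
  -- independence of each single `Y a` from `m` is needed.
  have hsplit : (fun ω => W ω * exp (∑ a, q a ω * (l * Y a ω - s * l ^ 2 / 2))) = fun ω =>
      (W ω - ∑ a, W ω * q a ω) + ∑ a, W ω * q a ω * exp (l * Y a ω - s * l ^ 2 / 2) := by
    ext ω
    rw [exp_sum_mul_eq_of_selector (hq · ω) (hqsum ω), ← Finset.mul_sum]
    simp only [mul_add, mul_sub, mul_one, Finset.mul_sum, mul_assoc]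
  have hint : Integrable (fun ω => W ω - ∑ a, W ω * q a ω) μ :=
    hW.sub (integrable_finsetSum _ fun a _ => hWq a)
  rw [hsplit]
  refine ⟨hint.add (integrable_finsetSum _ fun a _ => (hstep a).1), ?_⟩
  rw [integral_add hint (integrable_finsetSum _ fun a _ => (hstep a).1),
    integral_sub hW (integrable_finsetSum _ fun a _ => hWq a),
    integral_finsetSum _ fun a _ => hWq a, integral_finsetSum _ fun a _ => (hstep a).1]
  linarith [Finset.sum_le_sum fun a (_ : a ∈ Finset.univ) => (hstep a).2]

lemma stoppedProcess_succ_eq_mul {M G : ℕ → Ω → ℝ} (hM : ∀ t ω, M (t + 1) ω = M t ω * G t ω)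
    (τ : Ω → ℕ) (t : ℕ) (ω : Ω) :
    stoppedProcess M (fun ω => (τ ω : WithTop ℕ)) (t + 1) ω =
      stoppedProcess M (fun ω => (τ ω : WithTop ℕ)) t ω * if τ ω ≤ t then 1 else G t ω := by
  change M (min (t + 1) (τ ω)) ω = M (min t (τ ω)) ω * _
  split_ifs with h
  · rw [min_eq_right (h.trans t.le_succ), min_eq_right h, mul_one]
  · push Not at h
    rw [min_eq_left h, min_eq_left h.le, hM]

theorem integral_stoppedProcess_le_one [IsProbabilityMeasure μ] {F : Filtration ℕ m₀}
    {R : Type*} [Fintype R] {ε Y : R → ℕ → Ω → ℝ} {s : ℝ≥0} {l : ℝ} {M : ℕ → Ω → ℝ}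
    (hε : ∀ a t ω, ε a t ω = 0 ∨ ε a t ω = 1) (hεsum : ∀ t ω, ∑ a, ε a t ω ≤ 1)
    (hεprev : ∀ a t, Measurable[F t] (ε a (t + 1)))
    (hYadapted : ∀ a t, Measurable[F t] (Y a t)) (hY : ∀ a t, HasSubgaussianMGF (Y a t) s μ)
    (hYindep : ∀ a t, Indep (MeasurableSpace.comap (Y a (t + 1)) inferInstance) (F t) μ)
    (hM0 : M 0 = 1) (hM : ∀ t ω, M (t + 1) ω =
      M t ω * exp (∑ a, ε a (t + 1) ω * (l * Y a (t + 1) ω - s * l ^ 2 / 2)))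
    {τ : Ω → ℕ} (hτ : IsStoppingTime F fun ω => (τ ω : WithTop ℕ)) (t : ℕ) :
    Measurable[F t] (stoppedProcess M (fun ω => (τ ω : WithTop ℕ)) t) ∧
      Integrable (stoppedProcess M (fun ω => (τ ω : WithTop ℕ)) t) μ ∧
      ∫ ω, stoppedProcess M (fun ω => (τ ω : WithTop ℕ)) t ω ∂μ ≤ 1 := by
  have hMpos : ∀ t ω, 0 < M t ω := by
    intro t ω
    induction t with
    | zero => simp [hM0]
    | succ t ih => rw [hM]; positivity
  set Z := stoppedProcess M (fun ω => (τ ω : WithTop ℕ))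
  induction t with
  | zero =>
    have hZ0 : Z 0 = fun _ => 1 := by ext ω; simp [Z, stoppedProcess, hM0]
    rw [hZ0]
    exact ⟨measurable_const, integrable_const 1, by simp⟩
  | succ t ih =>
    obtain ⟨hZm, hZi, hZ1⟩ := ih
    set q : R → Ω → ℝ := fun a ω => if τ ω ≤ t then 0 else ε a (t + 1) ω
    have hZsucc : Z (t + 1) =
        fun ω => Z t ω * exp (∑ a, q a ω * (l * Y a (t + 1) ω - s * l ^ 2 / 2)) := by
      ext ω
      simp only [Z]
      rw [stoppedProcess_succ_eq_mul hM]
      split_ifs with h <;> simp [q, h]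
    have hqm : ∀ a, Measurable[F t] (q a) := fun a =>
      Measurable.ite (by simpa using hτ t) measurable_const (hεprev a t)
    have hq : ∀ a ω, q a ω = 0 ∨ q a ω = 1 := fun a ω => by
      by_cases h : τ ω ≤ t <;> simp [q, h, hε]
    have hqsum : ∀ ω, ∑ a, q a ω ≤ 1 := fun ω => by
      by_cases h : τ ω ≤ t <;> simp [q, h, hεsum]
    have hZ0 : 0 ≤ Z t := fun ω => (hMpos _ ω).le
    obtain ⟨hint, hle⟩ := integral_mul_exp_sum_le_of_indep (F.le t) hZm hZi hZ0 hqm hq hqsum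
      (fun a => hY a (t + 1)) (fun a => hYindep a t) l
    rw [hZsucc]
    refine ⟨?_, hint, hle.trans hZ1⟩
    have hmono := F.mono t.le_succ
    exact (hZm.mono hmono le_rfl).mul (Finset.measurable_sum _ fun a _ =>
      ((hqm a).mono hmono le_rfl).mul (((hYadapted a (t + 1)).const_mul l).sub_const _)).exp

lemma exp_sub_succ_eq_mul {R : Type*} [Fintype R] {ε Y : R → ℕ → Ω → ℝ} {S N : ℕ → Ω → ℝ}
    (hS : ∀ t ω, S t ω = ∑ s ∈ Finset.Icc 1 t, ∑ a, ε a s ω * Y a s ω)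
    (hN : ∀ t ω, N t ω = ∑ s ∈ Finset.Icc 1 t, ∑ a, ε a s ω) (l c : ℝ) (t : ℕ) (ω : Ω) :
    exp (l * S (t + 1) ω - c * N (t + 1) ω) =
      exp (l * S t ω - c * N t ω) * exp (∑ a, ε a (t + 1) ω * (l * Y a (t + 1) ω - c)) := by
  rw [← exp_add, hS, hS, hN, hN, Finset.sum_Icc_succ_top (by omega),
    Finset.sum_Icc_succ_top (by omega)]
  simp only [mul_sub, Finset.mul_sum, Finset.sum_sub_distrib, mul_add]
  ring_nf

lemma measure_exp_le_le_of_integral_le_one [IsFiniteMeasure μ] {Z : Ω → ℝ} (hZ0 : 0 ≤ Z)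
    (hZ : Integrable Z μ) (hZ1 : ∫ ω, Z ω ∂μ ≤ 1) (x : ℝ) :
    μ {ω | exp x ≤ Z ω} ≤ ENNReal.ofReal (exp (-x)) := by
  have hmarkov := (mul_meas_ge_le_integral_of_nonneg (ae_of_all _ hZ0) hZ (exp x)).trans hZ1
  rw [← ofReal_measureReal]
  refine ENNReal.ofReal_le_ofReal ?_
  calc μ.real {ω | exp x ≤ Z ω} = exp (-x) * (exp x * μ.real {ω | exp x ≤ Z ω}) := by
        rw [← mul_assoc, ← exp_add, neg_add_cancel, exp_zero, one_mul]
    _ ≤ exp (-x) := mul_le_of_le_one_right (exp_nonneg _) hmarkov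

end

theorem stmt_10_general {Ω : Type*} {m : MeasurableSpace Ω} (P : Measure Ω)
    [IsProbabilityMeasure P] (F : Filtration ℕ m)
    {R : Type*} [Fintype R]
    (B : ℝ) (hB : 0 < B)
    (X : R → ℕ → Ω → ℝ)
    (hXbound : ∀ a t ω, X a t ω ∈ Set.Icc (0 : ℝ) B)
    (hXadapted : ∀ a t, Measurable[F t] (X a t))
    (hXindep : ∀ a s t, t < s →
      Indep (MeasurableSpace.comap (X a s) (inferInstance : MeasurableSpace ℝ)) (F t) P)
    (ε : R → ℕ → Ω → ℝ)
    (hεval : ∀ a t ω, ε a t ω = 0 ∨ ε a t ω = 1)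
    (hεprev : ∀ a t, Measurable[F (t - 1)] (ε a t))
    (hεsum : ∀ t ω, (∑ a, ε a t ω) = 0 ∨ (∑ a, ε a t ω) = 1)
    (S N : ℕ → Ω → ℝ)
    (hS : ∀ t ω, S t ω =
      ∑ s ∈ Finset.Icc 1 t, ∑ a, ε a s ω * (X a s ω - ∫ ω', X a s ω' ∂P))
    (hN : ∀ t ω, N t ω = ∑ s ∈ Finset.Icc 1 t, ∑ a, ε a s ω)
    (T n : ℕ) (δ : ℝ) (hδ : 0 < δ)
    (φ : Ω → ℕ) (hφ : IsStoppingTime F (fun ω => (φ ω : WithTop ℕ)))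
    (hφN : ∀ ω, φ ω ≤ T → (n : ℝ) ≤ N (φ ω) ω) :
    P {ω | N (φ ω) ω * δ ≤ S (φ ω) ω ∧ φ ω ≤ T}
      ≤ ENNReal.ofReal (Real.exp (-2 * n * δ ^ 2 / B ^ 2)) := by
  set s : ℝ≥0 := (‖B - 0‖₊ / 2) ^ 2
  set l : ℝ := 4 * δ / B ^ 2
  set c : ℝ := s * l ^ 2 / 2
  have hs : (s : ℝ) = B ^ 2 / 4 := by
    simp only [s, sub_zero, NNReal.coe_pow, NNReal.coe_div, coe_nnnorm, Real.norm_eq_abs,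
      abs_of_pos hB, NNReal.coe_ofNat]
    ring
  have hc : c = 2 * δ ^ 2 / B ^ 2 := by simp only [c, l, hs]; field_simp; ring
  have hlδ : l * δ = 2 * c := by rw [hc]; ring
  set M : ℕ → Ω → ℝ := fun t ω => exp (l * S t ω - c * N t ω)
  obtain ⟨-, hZi, hZ1⟩ := integral_stoppedProcess_le_one (μ := P) (M := M)
    (Y := fun a t ω => X a t ω - ∫ ω', X a t ω' ∂P) hεval
    (fun t ω => by rcases hεsum t ω with h | h <;> simp [h])
    (fun a t => by simpa using hεprev a (t + 1)) (fun a t => (hXadapted a t).sub_const _)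
    (fun a t => hasSubgaussianMGF_of_mem_Icc ((hXadapted a t).mono (F.le t) le_rfl).aemeasurable
      (ae_of_all _ (hXbound a t)))
    (fun a t => indep_of_indep_of_le_left (hXindep a (t + 1) t t.lt_succ_self)
      (comap_comp_le (f := fun x => x - ∫ ω', X a (t + 1) ω' ∂P) (by fun_prop) _))
    (by ext ω; simp [M, hS, hN]) (exp_sub_succ_eq_mul hS hN l c) hφ (T + 1)
  have hsub : {ω | N (φ ω) ω * δ ≤ S (φ ω) ω ∧ φ ω ≤ T} ⊆
      {ω | exp (c * n) ≤ stoppedProcess M (fun ω => (φ ω : WithTop ℕ)) (T + 1) ω} := by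
    rintro ω ⟨hSN, hφT⟩
    change exp (c * n) ≤ M (min (T + 1) (φ ω)) ω
    rw [min_eq_right (hφT.trans T.le_succ)]
    refine exp_le_exp.mpr ?_
    calc c * n ≤ c * N (φ ω) ω := mul_le_mul_of_nonneg_left (hφN ω hφT) (by rw [hc]; positivity)
      _ = l * (N (φ ω) ω * δ) - c * N (φ ω) ω := by linear_combination -N (φ ω) ω * hlδ
      _ ≤ l * S (φ ω) ω - c * N (φ ω) ω := by gcongr
  calc P {ω | N (φ ω) ω * δ ≤ S (φ ω) ω ∧ φ ω ≤ T}
      ≤ ENNReal.ofReal (exp (-(c * n))) :=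
        (measure_mono hsub).trans (measure_exp_le_le_of_integral_le_one
          (fun ω => (exp_pos _).le) hZi hZ1 _)
    _ = ENNReal.ofReal (exp (-2 * n * δ ^ 2 / B ^ 2)) := by rw [hc]; ring_nf

/-- Concentration bound with stopping time: let `(X a t)` for `a` in a finite set `R` be
independent sequences of independent random variables bounded in `[0, B]`, `(ε a t)` be
previsible `{0,1}`-valued selection sequences with at most one source selected per round,
`S t = ∑_{1 ≤ s ≤ t} ∑_a ε a s * (X a s - E[X a s])`, `N t = ∑_{1 ≤ s ≤ t} ∑_a ε a s`,
and `φ` a stopping time bounded by `T + 1` such that `φ ≤ T` implies `N φ ≥ n`.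
Then for any `δ > 0`, `P(S φ ≥ N φ * δ and φ ≤ T) ≤ exp (-2 n δ² / B²)`. -/
theorem stmt_10 {Ω : Type*} {m : MeasurableSpace Ω} (P : Measure Ω)
    [IsProbabilityMeasure P] (F : Filtration ℕ m)
    {R : Type*} [Fintype R]
    (B : ℝ) (hB : 0 < B)
    (X : R → ℕ → Ω → ℝ)
    (hXbound : ∀ a t ω, X a t ω ∈ Set.Icc (0 : ℝ) B)
    (hXadapted : ∀ a t, Measurable[F t] (X a t))
    (hXindep : ∀ a s t, t < s →
      Indep (MeasurableSpace.comap (X a s) (inferInstance : MeasurableSpace ℝ)) (F t) P)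
    (hXfam : ∀ a, iIndepFun (X a) P)
    (ε : R → ℕ → Ω → ℝ)
    (hεval : ∀ a t ω, ε a t ω = 0 ∨ ε a t ω = 1)
    (hεprev : ∀ a t, Measurable[F (t - 1)] (ε a t))
    (hεsum : ∀ t ω, (∑ a, ε a t ω) = 0 ∨ (∑ a, ε a t ω) = 1)
    (S N : ℕ → Ω → ℝ)
    (hS : ∀ t ω, S t ω =
      ∑ s ∈ Finset.Icc 1 t, ∑ a, ε a s ω * (X a s ω - ∫ ω', X a s ω' ∂P))
    (hN : ∀ t ω, N t ω = ∑ s ∈ Finset.Icc 1 t, ∑ a, ε a s ω)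
    (T n : ℕ) (hn : 0 < n) (δ : ℝ) (hδ : 0 < δ)
    (φ : Ω → ℕ) (hφ : IsStoppingTime F (fun ω => (φ ω : WithTop ℕ)))
    (hφle : ∀ ω, φ ω ≤ T + 1)
    (hφN : ∀ ω, φ ω ≤ T → (n : ℝ) ≤ N (φ ω) ω) :
    P {ω | N (φ ω) ω * δ ≤ S (φ ω) ω ∧ φ ω ≤ T}
      ≤ ENNReal.ofReal (Real.exp (-2 * n * δ ^ 2 / B ^ 2)) :=
  stmt_10_general P F B hB X hXbound hXadapted hXindep ε hεval hεprev hεsum S N hS hN T n δ hδ φ hφ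
    hφN
end

section
/- Under the conditions of the selection-martingale setting, the process W_t = exp(λS(t) − N(t)·φ_μ(λ)) with φ_μ(λ) = log(1 − μ + μ·exp(λ)) and λ < 0 is a supermartingale when all selected variables X^a_t ∈ [0,1] have E[X^a_t] ≥ μ. -/
open MeasureTheory ProbabilityTheory Finset

/-! Write `W t = exp (∑_{s ≤ t} Z s)` with `Z s = ∑_a ε^a_s (λ X^a_s - φ)`. Because the selectors
are `{0,1}`-valued with at most one active,
`exp (Z (t+1)) = 1 + ∑_a ε^a_{t+1} (exp (λ X^a_{t+1} - φ) - 1)`, which is affine in the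
previsible selectors. Each `X^a_{t+1}` is independent of `F t`, and convexity of `exp` gives
`E exp (λ X) ≤ 1 - E X + E X · e^λ ≤ 1 - μ + μ e^λ = e^φ` for `λ ≤ 0`, so
`E[exp (Z (t+1)) | F t] ≤ 1` and hence `E[W (t+1) | F t] ≤ W t`. -/

lemma Real.exp_mul_le_one_add_mul {l x : ℝ} (hx₀ : 0 ≤ x) (hx₁ : x ≤ 1) :
    Real.exp (l * x) ≤ 1 + (Real.exp l - 1) * x := by
  have h := convexOn_exp.2 (Set.mem_univ 0) (Set.mem_univ l) (sub_nonneg.2 hx₁) hx₀ (by ring)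
  simp only [smul_eq_mul, mul_zero, zero_add, Real.exp_zero, mul_one] at h
  rw [mul_comm l x]
  linarith

lemma eq_zero_or_eq_single_one {ι : Type*} [Fintype ι] [DecidableEq ι] {ε : ι → ℝ}
    (hε : ∀ a, ε a = 0 ∨ ε a = 1) (hsum : ∑ a, ε a = 0 ∨ ∑ a, ε a = 1) :
    ε = 0 ∨ ∃ b, ε = Pi.single b 1 := by
  by_cases h : ∀ a, ε a = 0
  · exact Or.inl (funext h)
  push Not at h
  obtain ⟨b, hb⟩ := h
  have hb1 : ε b = 1 := (hε b).resolve_left hb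
  refine Or.inr ⟨b, funext fun a => ?_⟩
  rcases eq_or_ne a b with rfl | hab
  · simp [hb1]
  rw [Pi.single_eq_of_ne hab]
  refine (hε a).resolve_right fun ha1 => ?_
  have hε_nonneg : ∀ i ∈ univ, 0 ≤ ε i := fun i _ => by rcases hε i with h | h <;> simp [h]
  have := add_le_sum hε_nonneg (mem_univ a) (mem_univ b) hab
  rcases hsum with h | h <;> linarith

lemma apply_sum_mul_of_selector {ι : Type*} [Fintype ι] {ε : ι → ℝ}
    (hε : ∀ a, ε a = 0 ∨ ε a = 1) (hsum : ∑ a, ε a = 0 ∨ ∑ a, ε a = 1) (f : ℝ → ℝ) (y : ι → ℝ) :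
    f (∑ a, ε a * y a) = f 0 + ∑ a, ε a * (f (y a) - f 0) := by
  classical
  rcases eq_zero_or_eq_single_one hε hsum with rfl | ⟨b, rfl⟩ <;> simp [Pi.single_apply]

section

variable {Ω : Type*} {m' m : MeasurableSpace Ω} {P : Measure Ω}

lemma mgf_le_one_sub_add_mul_exp [IsProbabilityMeasure P] {X : Ω → ℝ} {μ l : ℝ}
    (hX : AEMeasurable X P) (hX01 : ∀ ω, X ω ∈ Set.Icc (0 : ℝ) 1) (hl : l ≤ 0) (hμ : μ ≤ P[X]) :
    mgf X P l ≤ 1 - μ + μ * Real.exp l := by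
  have hXint : Integrable X P := .of_mem_Icc 0 1 hX (ae_of_all _ hX01)
  have hexp : Real.exp l ≤ 1 := Real.exp_le_one_iff.2 hl
  calc mgf X P l ≤ ∫ ω, 1 + (Real.exp l - 1) * X ω ∂P :=
        integral_mono_of_nonneg (ae_of_all _ fun ω => (Real.exp_pos _).le)
          ((integrable_const 1).add (hXint.const_mul _))
          (ae_of_all _ fun ω => Real.exp_mul_le_one_add_mul (hX01 ω).1 (hX01 ω).2)
    _ = 1 + (Real.exp l - 1) * P[X] := by
        rw [integral_add (integrable_const 1) (hXint.const_mul _), integral_const_mul]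
        simp
    _ ≤ 1 - μ + μ * Real.exp l := by nlinarith

lemma condExp_exp_mul_sub_log_sub_one_nonpos [IsProbabilityMeasure P]
    (hm : m' ≤ m) {Y : Ω → ℝ} (hY : Measurable Y) (hY01 : ∀ ω, Y ω ∈ Set.Icc (0 : ℝ) 1)
    (hindep : Indep (MeasurableSpace.comap Y inferInstance) m' P) {μ l : ℝ} (hl : l ≤ 0)
    (hμ : μ ≤ P[Y]) :
    P[fun ω => Real.exp (l * Y ω - Real.log (1 - μ + μ * Real.exp l)) - 1 | m'] ≤ᵐ[P] 0 := by
  set q := 1 - μ + μ * Real.exp l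
  have hμ1 : μ ≤ 1 := hμ.trans <| by
    simpa using integral_mono_of_nonneg (μ := P) (ae_of_all _ fun ω => (hY01 ω).1)
      (integrable_const (1 : ℝ)) (ae_of_all _ fun ω => (hY01 ω).2)
  have hq : 0 < q := by
    nlinarith [Real.exp_pos l, Real.exp_le_one_iff.2 hl]
  have hmeas : StronglyMeasurable[MeasurableSpace.comap Y inferInstance]
      (fun ω => Real.exp (l * Y ω - Real.log q) - 1) :=
    ((((comap_measurable Y).const_mul l).sub_const _).exp.sub_const 1).stronglyMeasurable
  filter_upwards [condExp_indep_eq hY.comap_le hm hmeas hindep] with ω hω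
  rw [hω]
  have : ∫ ω, Real.exp (l * Y ω - Real.log q) - 1 ∂P = mgf Y P l / q - 1 := by
    simp_rw [Real.exp_sub, Real.exp_log hq]
    rw [integral_sub
      ((integrable_exp_mul_of_mem_Icc hY.aemeasurable (ae_of_all _ hY01)).div_const q)
      (integrable_const 1), integral_div]
    simp [mgf]
  rw [this, Pi.zero_apply, sub_nonpos, div_le_one hq]
  exact mgf_le_one_sub_add_mul_exp hY.aemeasurable hY01 hl hμ

lemma condExp_one_add_sum_mul_le_one [IsFiniteMeasure P] (hm : m' ≤ m)
    {ι : Type*} [Fintype ι] {ε h : ι → Ω → ℝ} {C : ℝ} (hε : ∀ a, StronglyMeasurable[m'] (ε a))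
    (hε_nonneg : ∀ a ω, 0 ≤ ε a ω) (hε_le : ∀ a ω, ε a ω ≤ C) (hh : ∀ a, Integrable (h a) P)
    (hcond : ∀ a, P[h a | m'] ≤ᵐ[P] 0) :
    P[fun ω => 1 + ∑ a, ε a ω * h a ω | m'] ≤ᵐ[P] 1 := by
  have hεh : ∀ a, Integrable (ε a * h a) P := fun a =>
    (hh a).bdd_mul ((hε a).mono hm).aestronglyMeasurable (ae_of_all _ fun ω => by
      rw [Real.norm_eq_abs, abs_of_nonneg (hε_nonneg a ω)]; exact hε_le a ω)
  have hterm : ∀ a, P[ε a * h a | m'] ≤ᵐ[P] 0 := fun a => by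
    filter_upwards [condExp_mul_of_stronglyMeasurable_left (hε a) (hεh a) (hh a), hcond a]
      with ω h₁ h₂
    rw [h₁]
    exact mul_nonpos_of_nonneg_of_nonpos (hε_nonneg a ω) h₂
  have hsplit : (fun ω => 1 + ∑ a, ε a ω * h a ω) = (fun _ => (1 : ℝ)) + ∑ a, ε a * h a := by
    ext ω; simp
  rw [hsplit]
  filter_upwards [condExp_add (integrable_const (1 : ℝ))
      (integrable_finsetSum' univ fun a _ => hεh a) m',
    condExp_finsetSum (fun a _ => hεh a) m', ae_all_iff.2 hterm] with ω h₁ h₂ h₃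
  rw [h₁, Pi.add_apply, condExp_const hm, h₂, Finset.sum_apply]
  simpa using sum_nonpos fun a _ => h₃ a

lemma condExp_exp_sum_mul_sub_log_le_one [IsProbabilityMeasure P] (hm : m' ≤ m)
    {ι : Type*} [Fintype ι] {ε Y : ι → Ω → ℝ} (hε : ∀ a, Measurable[m'] (ε a))
    (hε_val : ∀ a ω, ε a ω = 0 ∨ ε a ω = 1) (hε_sum : ∀ ω, ∑ a, ε a ω = 0 ∨ ∑ a, ε a ω = 1)
    (hY : ∀ a, Measurable (Y a)) (hY01 : ∀ a ω, Y a ω ∈ Set.Icc (0 : ℝ) 1)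
    (hindep : ∀ a, Indep (MeasurableSpace.comap (Y a) inferInstance) m' P) {μ l : ℝ}
    (hl : l ≤ 0) (hμ : ∀ a, μ ≤ P[Y a]) :
    P[fun ω => Real.exp (∑ a, ε a ω * (l * Y a ω - Real.log (1 - μ + μ * Real.exp l))) | m']
      ≤ᵐ[P] 1 := by
  set φ := Real.log (1 - μ + μ * Real.exp l)
  have hsel : (fun ω => Real.exp (∑ a, ε a ω * (l * Y a ω - φ))) =
      fun ω => 1 + ∑ a, ε a ω * (Real.exp (l * Y a ω - φ) - 1) := by
    ext ω
    simpa using apply_sum_mul_of_selector (hε_val · ω) (hε_sum ω) Real.exp (l * Y · ω - φ)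
  have hε_mem : ∀ a ω, ε a ω ∈ Set.Icc (0 : ℝ) 1 := fun a ω => by
    rcases hε_val a ω with h | h <;> simp [h]
  have hint : ∀ a, Integrable (fun ω => Real.exp (l * Y a ω - φ) - 1) P := fun a => by
    simp_rw [Real.exp_sub]
    exact ((integrable_exp_mul_of_mem_Icc (hY a).aemeasurable
      (ae_of_all _ (hY01 a))).div_const _).sub (integrable_const 1)
  rw [hsel]
  exact condExp_one_add_sum_mul_le_one hm (fun a => (hε a).stronglyMeasurable)
    (fun a ω => (hε_mem a ω).1) (fun a ω => (hε_mem a ω).2) hint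
    fun a => condExp_exp_mul_sub_log_sub_one_nonpos hm (hY a) (hY01 a) (hindep a) hl (hμ a)

lemma supermartingale_exp_partialSum [IsFiniteMeasure P] {F : Filtration ℕ m}
    {Z : ℕ → Ω → ℝ} {C : ℝ} (hZ : Adapted F Z) (hZ_le : ∀ t ω, Z t ω ≤ C)
    (hcond : ∀ t, P[fun ω => Real.exp (Z (t + 1) ω) | F t] ≤ᵐ[P] 1) :
    Supermartingale (fun t ω => Real.exp (∑ s ∈ Icc 1 t, Z s ω)) F P := by
  set W : ℕ → Ω → ℝ := fun t ω => Real.exp (∑ s ∈ Icc 1 t, Z s ω)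
  have hW : Adapted F W := fun t =>
    (measurable_sum _ fun s hs => (hZ s).mono (F.mono (mem_Icc.1 hs).2) le_rfl).exp
  have hW_int : ∀ t, Integrable (W t) P := fun t =>
    .of_bound ((hW t).mono (F.le t) le_rfl).aestronglyMeasurable (Real.exp (t * C))
      (ae_of_all _ fun ω => by
        rw [Real.norm_eq_abs, abs_of_pos (Real.exp_pos _), Real.exp_le_exp]
        simpa using sum_le_card_nsmul (Icc 1 t) (Z · ω) C fun s _ => hZ_le s ω)
  have hexpZ_int : ∀ t, Integrable (fun ω => Real.exp (Z t ω)) P := fun t =>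
    .of_bound ((hZ t).mono (F.le t) le_rfl).exp.aestronglyMeasurable (Real.exp C)
      (ae_of_all _ fun ω => by
        rw [Real.norm_eq_abs, abs_of_pos (Real.exp_pos _), Real.exp_le_exp]
        exact hZ_le t ω)
  have hrec : ∀ t, W (t + 1) = W t * fun ω => Real.exp (Z (t + 1) ω) := fun t => by
    ext ω
    simp [W, sum_Icc_succ_top, Real.exp_add]
  refine supermartingale_nat (fun t => (hW t).stronglyMeasurable) hW_int fun t => ?_
  rw [hrec]
  filter_upwards [condExp_mul_of_stronglyMeasurable_left (hW t).stronglyMeasurable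
    (hrec t ▸ hW_int (t + 1)) (hexpZ_int _), hcond t] with ω h₁ h₂
  rw [h₁, Pi.mul_apply]
  exact mul_le_of_le_one_right (Real.exp_pos _).le h₂

end

theorem stmt_11_general {Ω : Type*} {m : MeasurableSpace Ω} (P : Measure Ω)
    [IsProbabilityMeasure P] (F : Filtration ℕ m)
    {R : Type*} [Fintype R]
    (X : R → ℕ → Ω → ℝ)
    (hXbound : ∀ a t ω, X a t ω ∈ Set.Icc (0 : ℝ) 1)
    (hXadapted : ∀ a t, Measurable[F t] (X a t))
    (hXindep : ∀ a s t, t < s →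
      Indep (MeasurableSpace.comap (X a s) (inferInstance : MeasurableSpace ℝ)) (F t) P)
    (μ : ℝ)
    (hμle : ∀ a t, μ ≤ ∫ ω, X a t ω ∂P)
    (ε : R → ℕ → Ω → ℝ)
    (hεval : ∀ a t ω, ε a t ω = 0 ∨ ε a t ω = 1)
    (hεprev : ∀ a t, Measurable[F (t - 1)] (ε a t))
    (hεsum : ∀ t ω, (∑ a, ε a t ω) = 0 ∨ (∑ a, ε a t ω) = 1)
    (S N : ℕ → Ω → ℝ)
    (hS : ∀ t ω, S t ω = ∑ s ∈ Finset.Icc 1 t, ∑ a, ε a s ω * X a s ω)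
    (hN : ∀ t ω, N t ω = ∑ s ∈ Finset.Icc 1 t, ∑ a, ε a s ω)
    (l : ℝ) (hl : l < 0)
    (W : ℕ → Ω → ℝ)
    (hW : ∀ t ω, W t ω =
      Real.exp (l * S t ω - N t ω * Real.log (1 - μ + μ * Real.exp l))) :
    Supermartingale W F P := by
  set φ := Real.log (1 - μ + μ * Real.exp l)
  set Z : ℕ → Ω → ℝ := fun s ω => ∑ a, ε a s ω * (l * X a s ω - φ)
  have hWZ : W = fun t ω => Real.exp (∑ s ∈ Icc 1 t, Z s ω) := by
    ext t ω
    simp only [hW, hS, hN, Z, mul_sub, mul_sum, sum_mul, ← sum_sub_distrib]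
    congr 1
    exact sum_congr rfl fun s _ => sum_congr rfl fun a _ => by ring
  rw [hWZ]
  refine supermartingale_exp_partialSum (C := Fintype.card R * |φ|) (fun s => ?_)
    (fun s ω => ?_) (fun t => ?_)
  · exact measurable_sum _ fun a _ =>
      ((hεprev a s).mono (F.mono (Nat.sub_le s 1)) le_rfl).mul
        (((hXadapted a s).const_mul l).sub_const φ)
  · simpa using sum_le_card_nsmul univ _ |φ| fun a _ => by
      rcases hεval a s ω with h | h <;> simp only [h, zero_mul, one_mul, abs_nonneg]
      nlinarith [neg_abs_le φ, (hXbound a s ω).1]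
  · exact condExp_exp_sum_mul_sub_log_le_one (F.le t) (fun a => hεprev a (t + 1))
      (hεval · (t + 1)) (hεsum (t + 1))
      (fun a => (hXadapted a (t + 1)).mono (F.le _) le_rfl) (fun a => hXbound a (t + 1))
      (fun a => hXindep a (t + 1) t t.lt_succ_self) hl.le (fun a => hμle a (t + 1))

/-- In the selection-martingale setting (independent `[0,1]`-valued sources `X a t` with
`E[X a t] ≥ μ`, previsible `{0,1}`-valued selectors with at most one active per round,
`S t = ∑_{1 ≤ s ≤ t} ∑_a ε a s * X a s`, `N t = ∑_{1 ≤ s ≤ t} ∑_a ε a s`), for `λ < 0`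
the process `W t = exp (λ S t - N t * φ_μ λ)` with `φ_μ λ = log (1 - μ + μ exp λ)` is a
supermartingale. -/
theorem stmt_11 {Ω : Type*} {m : MeasurableSpace Ω} (P : Measure Ω)
    [IsProbabilityMeasure P] (F : Filtration ℕ m)
    {R : Type*} [Fintype R]
    (X : R → ℕ → Ω → ℝ)
    (hXbound : ∀ a t ω, X a t ω ∈ Set.Icc (0 : ℝ) 1)
    (hXadapted : ∀ a t, Measurable[F t] (X a t))
    (hXindep : ∀ a s t, t < s →
      Indep (MeasurableSpace.comap (X a s) (inferInstance : MeasurableSpace ℝ)) (F t) P)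
    (hXfam : ∀ a, iIndepFun (X a) P)
    (μ : ℝ) (hμ0 : 0 ≤ μ) (hμ1 : μ ≤ 1)
    (hμle : ∀ a t, μ ≤ ∫ ω, X a t ω ∂P)
    (ε : R → ℕ → Ω → ℝ)
    (hεval : ∀ a t ω, ε a t ω = 0 ∨ ε a t ω = 1)
    (hεprev : ∀ a t, Measurable[F (t - 1)] (ε a t))
    (hεsum : ∀ t ω, (∑ a, ε a t ω) = 0 ∨ (∑ a, ε a t ω) = 1)
    (S N : ℕ → Ω → ℝ)
    (hS : ∀ t ω, S t ω = ∑ s ∈ Finset.Icc 1 t, ∑ a, ε a s ω * X a s ω)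
    (hN : ∀ t ω, N t ω = ∑ s ∈ Finset.Icc 1 t, ∑ a, ε a s ω)
    (l : ℝ) (hl : l < 0)
    (W : ℕ → Ω → ℝ)
    (hW : ∀ t ω, W t ω =
      Real.exp (l * S t ω - N t ω * Real.log (1 - μ + μ * Real.exp l))) :
    Supermartingale W F P :=
  stmt_11_general P F X hXbound hXadapted hXindep μ hμle ε hεval hεprev hεsum S N hS hN l hl W hW
end

section
/- Pseudo-unimodality: assume a strict total order ≻ on items 1,...,L restricted so that 1 ≻ 2 ≻ ... ≻ K ≻ j for all j > K, and let P* = ({1},...,{K}, {K+1,...,L}). Then for any ordered partition P̃ = (P̃_1,...,P̃_d̃) of [L] with P̃ ≠ P* (where the first d̃−1 subsets cover at least K items and all but the last subsets before it have strictly fewer than K items cumulatively), either there exists c with |P̃_c| > 1 whose most attractive element is strictly more attractive than its second most attractive element, or there exist c ∈ [d̃−1] and (i,j) ∈ P̃_c × P̃_{c+1} with j ≻ i. -/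
/-- Pseudo-unimodality assuming a strict total order on the top-`K` items.  Items are
`Fin L` (so item `c` of the paper is index `c - 1` here); `g` satisfies
`g 0 > g 1 > ... > g (K-1) > g j` for all `j ≥ K`.  `P*` separates each top-`K` item into
a singleton and gathers the remaining items.  For any ordered partition
`p 0, ..., p (d-1)` of the items different from `P*` (with the first `d - 1` subsets
covering at least `K` items and the first `d - 2` covering strictly fewer than `K`),
either some subset of size `> 1` has a strict unique most attractive element, or two
consecutive subsets contain items `i` and `j` with `g i < g j`. -/
theorem stmt_14 (L K : ℕ) (hK : 0 < K) (hKL : K < L)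
    (g : Fin L → ℝ)
    (hg : ∀ i j : Fin L, i < j → (i : ℕ) < K → g j < g i)
    (d : ℕ) (hd : 1 ≤ d) (p : ℕ → Finset (Fin L))
    (hempty : ∀ c, d ≤ c → p c = ∅)
    (hdisj : ∀ c c', c < d → c' < d → c ≠ c' → Disjoint (p c) (p c'))
    (hcover : ∀ i : Fin L, ∃ c < d, i ∈ p c)
    (hnonempty : ∀ c, c < d - 1 → (p c).Nonempty)
    (hatleastK : K ≤ ∑ c ∈ Finset.range (d - 1), (p c).card)
    (hlessK : ∑ c ∈ Finset.range (d - 2), (p c).card < K)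
    (hne : ¬ (d = K + 1
        ∧ (∀ c : ℕ, ∀ hc : c < K, p c = {(⟨c, lt_trans hc hKL⟩ : Fin L)})
        ∧ p K = Finset.univ.filter (fun i : Fin L => K ≤ (i : ℕ)))) :
    (∃ c < d, 1 < (p c).card ∧ ∃ i ∈ p c, ∀ j ∈ p c, j ≠ i → g j < g i)
    ∨ (∃ c, c + 1 < d ∧ ∃ i ∈ p c, ∃ j ∈ p (c + 1), g i < g j) := by
  by_contra hcon
  push_neg at hcon
  obtain ⟨h1, h2⟩ := hcon
  choose b hbd hbm using hcover
  -- uniqueness of block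
  have huniq : ∀ (i : Fin L) (c : ℕ), c < d → i ∈ p c → c = b i := by
    intro i c hc hi
    by_contra hne'
    exact absurd (hbm i) (Finset.disjoint_left.mp (hdisj c (b i) hc (hbd i) hne') hi)
  -- a block containing a top-K item is a singleton
  have hsing : ∀ (c : ℕ) (x : Fin L), c < d → x ∈ p c → (x : ℕ) < K → p c = {x} := by
    intro c x hc hx hxK
    by_contra hne'
    have hy : ∃ y ∈ p c, y ≠ x := by
      by_contra hy
      push_neg at hy
      exact hne' (Finset.eq_singleton_iff_unique_mem.mpr ⟨hx, hy⟩)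
    obtain ⟨y, hy, hyx⟩ := hy
    have hcard : 1 < (p c).card := Finset.one_lt_card.mpr ⟨y, hy, x, hx, hyx⟩
    set m := (p c).min' ⟨x, hx⟩ with hm
    have hmmem : m ∈ p c := (p c).min'_mem ⟨x, hx⟩
    have hmx : m ≤ x := (p c).min'_le x hx
    have hmK : (m : ℕ) < K := lt_of_le_of_lt (Fin.le_def.mp hmx) hxK
    obtain ⟨j, hj, hjm, hgj⟩ := h1 c hc hcard m hmmem
    have hmj : m < j := lt_of_le_of_ne ((p c).min'_le j hj) (Ne.symm hjm)
    have := hg m j hmj hmK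
    linarith
  -- chain: elements of later blocks have smaller g
  have hchain : ∀ n c, c + n + 1 < d → ∀ i ∈ p c, ∀ j ∈ p (c + n + 1), g j ≤ g i := by
    intro n
    induction n with
    | zero => intro c hc i hi j hj; exact h2 c hc i hi j hj
    | succ n ih =>
      intro c hc i hi j hj
      have hnd : c + n + 1 < d - 1 := by omega
      obtain ⟨x, hx⟩ := hnonempty _ hnd
      have hx1 : g x ≤ g i := ih c (by omega) i hi x hx
      have hj' : j ∈ p (c + n + 1 + 1) := by
        have : c + (n + 1) + 1 = c + n + 1 + 1 := by omega
        rwa [this] at hj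
      have hx2 : g j ≤ g x := h2 (c + n + 1) (by omega) x hx j hj'
      linarith
  -- monotonicity of block indices
  have hmono : ∀ i j : Fin L, (i : ℕ) < K → i < j → b i < b j := by
    intro i j hiK hij
    have hgj : g j < g i := hg i j hij hiK
    rcases lt_trichotomy (b i) (b j) with h | h | h
    · exact h
    · exfalso
      have hpi : p (b i) = {i} := hsing _ i (hbd i) (hbm i) hiK
      have hj' : j ∈ p (b i) := by rw [h]; exact hbm j
      rw [hpi, Finset.mem_singleton] at hj'
      exact absurd hj' (ne_of_gt hij)
    · exfalso
      obtain ⟨n, hn⟩ : ∃ n, b i = b j + n + 1 := ⟨b i - b j - 1, by omega⟩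
      have hi' : i ∈ p (b j + n + 1) := by rw [← hn]; exact hbm i
      have : g i ≤ g j := hchain n (b j) (hn ▸ hbd i) j (hbm j) i hi'
      linarith
  -- identify the blocks of the top-K items
  have hblock : ∀ n, ∀ hn : n < K, b ⟨n, lt_trans hn hKL⟩ = n := by
    intro n
    induction n using Nat.strong_induction_on with
    | _ n ih =>
      intro hn
      have hge : n ≤ b ⟨n, lt_trans hn hKL⟩ := by
        rcases Nat.eq_zero_or_pos n with h0 | h0
        · omega
        · have hm : b ⟨n - 1, by omega⟩ = n - 1 := ih (n - 1) (by omega) (by omega)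
          have := hmono ⟨n - 1, by omega⟩ ⟨n, lt_trans hn hKL⟩ (by simpa using by omega)
            (by rw [Fin.lt_def]; simpa using by omega)
          omega
      by_contra hne'
      have hlt : n < b ⟨n, lt_trans hn hKL⟩ := by omega
      have hnd : n < d - 1 := by have := hbd ⟨n, lt_trans hn hKL⟩; omega
      obtain ⟨x, hx⟩ := hnonempty n hnd
      have hbx : b x = n := (huniq x n (by omega) hx).symm
      rcases lt_trichotomy (x : ℕ) n with hxn | hxn | hxn
      · have hxK : (x : ℕ) < K := by omega
        have h3 : b ⟨(x : ℕ), lt_trans hxK hKL⟩ = (x : ℕ) := ih (x : ℕ) hxn hxK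
        have hxx : (⟨(x : ℕ), lt_trans hxK hKL⟩ : Fin L) = x := Fin.ext rfl
        rw [hxx] at h3
        omega
      · have hxi : x = ⟨n, lt_trans hn hKL⟩ := Fin.ext hxn
        rw [hxi] at hbx
        omega
      · have := hmono ⟨n, lt_trans hn hKL⟩ x (by simpa using hn)
          (by rw [Fin.lt_def]; simpa using hxn)
        omega
  -- top-K blocks are singletons at the right place
  have hpn : ∀ n, ∀ hn : n < K, p n = {(⟨n, lt_trans hn hKL⟩ : Fin L)} := by
    intro n hn
    have hmem : (⟨n, lt_trans hn hKL⟩ : Fin L) ∈ p n := by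
      have := hbm ⟨n, lt_trans hn hKL⟩
      rwa [hblock n hn] at this
    exact hsing n _ (by have := hbd ⟨n, lt_trans hn hKL⟩; rw [hblock n hn] at this; exact this)
      hmem (by simpa using hn)
  -- items ≥ K live in blocks ≥ K
  have hbK : ∀ j : Fin L, K ≤ (j : ℕ) → K ≤ b j := by
    intro j hj
    have h3 : b ⟨K - 1, by omega⟩ = K - 1 := hblock (K - 1) (by omega)
    have := hmono ⟨K - 1, by omega⟩ j (by simpa using by omega)
      (by rw [Fin.lt_def]; simp; omega)
    omega
  -- d = K + 1
  have hdK : d = K + 1 := by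
    have h1d : K + 1 ≤ d := by
      have := hbK ⟨K, hKL⟩ (by simp)
      have := hbd ⟨K, hKL⟩
      omega
    by_contra hdn
    have hd2 : K ≤ d - 2 := by omega
    have hsum : ∑ c ∈ Finset.range K, (p c).card = K := by
      have : ∀ c ∈ Finset.range K, (p c).card = 1 := by
        intro c hc
        rw [hpn c (Finset.mem_range.mp hc)]
        simp
      rw [Finset.sum_congr rfl this]
      simp
    have hle : ∑ c ∈ Finset.range K, (p c).card ≤ ∑ c ∈ Finset.range (d - 2), (p c).card :=
      Finset.sum_le_sum_of_subset (Finset.range_subset_range.mpr hd2)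
    omega
  -- conclusion
  apply hne
  refine ⟨hdK, fun c hc => hpn c hc, ?_⟩
  ext j
  simp only [Finset.mem_filter, Finset.mem_univ, true_and]
  constructor
  · intro hj
    by_contra hjK
    push_neg at hjK
    have hbj : b j = (j : ℕ) := by
      have h3 := hblock (j : ℕ) hjK
      have hxx : (⟨(j : ℕ), lt_trans hjK hKL⟩ : Fin L) = j := Fin.ext rfl
      rwa [hxx] at h3
    have := huniq j K (by omega) hj
    omega
  · intro hjK
    have h1' := hbK j hjK
    have h2' := hbd j
    have : b j = K := by omega
    rw [← this]
    exact hbm j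
end

section
/- If an expected click difference is positive for each fixed recommendation, it is positive after uniform mixing over a symmetric set of recommendations: let P be a partition of items with i, j in the same recommended subset, suppose for every recommendation a compatible with P we have E[c_i − c_j | c_i ≠ c_j, a' uniform in {a, (i,j)∘a}] > 0, and suppose the compatible set A(P) is closed under the swap (i,j)∘·. If P(c_i ≠ c_j) > 0 under a uniform draw from A(P), then E[c_i − c_j | c_i ≠ c_j] > 0 under that uniform draw. -/
/-- If the expected click difference is positive for each fixed recommendation, it is
positive after uniform mixing over a swap-closed set of recommendations.  For each
recommendation `a`, `p10 a` (resp. `p01 a`) is the probability that item `i` is clicked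
and `j` is not (resp. `j` clicked and `i` not); `σ` is the swap `(i,j) ∘ ·`, an
involution mapping the compatible set `A` to itself.  If for every `a ∈ A` the expected
click difference under a uniform draw from `{a, σ a}` is positive (whenever the
probability of differing clicks is positive), and the probability of differing clicks
under a uniform draw from `A` is positive, then the expected click difference under a
uniform draw from `A` is positive. -/
theorem stmt_15 {α : Type*} (A : Finset α) (hA : A.Nonempty)
    (σ : α → α) (hσA : ∀ a ∈ A, σ a ∈ A) (hσinv : ∀ a, σ (σ a) = a)
    (p10 p01 : α → ℝ)
    (hp10 : ∀ a, 0 ≤ p10 a) (hp01 : ∀ a, 0 ≤ p01 a)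
    (hp10le : ∀ a, p10 a ≤ 1) (hp01le : ∀ a, p01 a ≤ 1)
    (hpos : ∀ a ∈ A,
      0 < p10 a + p10 (σ a) + p01 a + p01 (σ a) →
      0 < ((p10 a + p10 (σ a)) - (p01 a + p01 (σ a)))
          / (p10 a + p10 (σ a) + p01 a + p01 (σ a)))
    (hdiff : 0 < ∑ a ∈ A, (p10 a + p01 a)) :
    0 < (∑ a ∈ A, (p10 a - p01 a)) / (∑ a ∈ A, (p10 a + p01 a)) := by
  apply div_pos _ hdiff
  have hσsum : ∀ f : α → ℝ, ∑ a ∈ A, f (σ a) = ∑ a ∈ A, f a := by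
    intro f
    exact Finset.sum_nbij' σ σ hσA hσA (fun a _ => hσinv a) (fun a _ => hσinv a)
      (fun a _ => rfl)
  have key : (2 : ℝ) * ∑ a ∈ A, (p10 a - p01 a)
      = ∑ a ∈ A, ((p10 a + p10 (σ a)) - (p01 a + p01 (σ a))) := by
    rw [Finset.mul_sum]
    rw [show (∑ a ∈ A, ((p10 a + p10 (σ a)) - (p01 a + p01 (σ a))))
        = (∑ a ∈ A, (p10 a - p01 a)) + ∑ a ∈ A, (p10 (σ a) - p01 (σ a)) by
      rw [← Finset.sum_add_distrib]; apply Finset.sum_congr rfl; intros; ring]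
    rw [hσsum (fun a => p10 a - p01 a)]
    rw [← Finset.sum_add_distrib]
    apply Finset.sum_congr rfl; intros; ring
  have hterm : ∀ a ∈ A, 0 ≤ (p10 a + p10 (σ a)) - (p01 a + p01 (σ a)) := by
    intro a ha
    rcases lt_or_eq_of_le (by have := hp10 a; have := hp10 (σ a); have := hp01 a; have := hp01 (σ a); linarith : (0:ℝ) ≤ p10 a + p10 (σ a) + p01 a + p01 (σ a))
      with hd | hd
    · have := hpos a ha hd
      have := (div_pos_iff.mp this)
      rcases this with ⟨h1, _⟩ | ⟨_, h2⟩
      · linarith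
      · linarith
    · have h10 : p10 a = 0 := by nlinarith [hp10 a, hp10 (σ a), hp01 a, hp01 (σ a)]
      have h10' : p10 (σ a) = 0 := by nlinarith [hp10 a, hp10 (σ a), hp01 a, hp01 (σ a)]
      have h01 : p01 a = 0 := by nlinarith [hp10 a, hp10 (σ a), hp01 a, hp01 (σ a)]
      have h01' : p01 (σ a) = 0 := by nlinarith [hp10 a, hp10 (σ a), hp01 a, hp01 (σ a)]
      simp [h10, h10', h01, h01']
  obtain ⟨a0, ha0, hpa0⟩ : ∃ a ∈ A, 0 < p10 a + p01 a := by
    by_contra h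
    push_neg at h
    have : ∑ a ∈ A, (p10 a + p01 a) ≤ 0 :=
      Finset.sum_nonpos (fun a ha => h a ha)
    linarith
  have hd0 : 0 < p10 a0 + p10 (σ a0) + p01 a0 + p01 (σ a0) := by
    have := hp10 (σ a0); have := hp01 (σ a0); linarith
  have hterm0 : 0 < (p10 a0 + p10 (σ a0)) - (p01 a0 + p01 (σ a0)) := by
    have := hpos a0 ha0 hd0
    rcases div_pos_iff.mp this with ⟨h1, _⟩ | ⟨_, h2⟩
    · linarith
    · linarith
  have hsum : 0 < ∑ a ∈ A, ((p10 a + p10 (σ a)) - (p01 a + p01 (σ a))) :=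
    Finset.sum_pos' hterm ⟨a0, ha0, hterm0⟩
  linarith [key]
end
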